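/- arXiv:1603.04234 — 9 statements merged into one kernel-verified Lean document; each statement's English description precedes it below -/
import Mathlib

section
/- Fix positions Pos : ℕ → ℝ and a power P ∈ ℝ, and let f_P be the push-reach function. Suppose 1 ≤ p ≤ q, f_P(p) = Pos(p) + P, and f_P(i−1) < Pos(i) for every i with p < i ≤ q. Then f_P(q) = 2^{q−p}·Pos(p) + (2^{q−p+1} − 1)·P − Σ_{i=p+1}^{q} 2^{q−i}·Pos(i). -/
/-- The push-reach function `Reach_LR`: `pushReach Pos P q` is the rightmost point to
which agents `a_1, …, a_q` at positions `Pos 1, …, Pos q`, each with power `P`, can carry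
the information of `a_1` via a push strategy.  It satisfies `pushReach Pos P 1 = Pos 1 + P`
and `pushReach Pos P i = P + 2 * min (pushReach Pos P (i-1)) (Pos i) - Pos i` for `i ≥ 2`. -/
def pushReach (Pos : ℕ → ℝ) (P : ℝ) : ℕ → ℝ
  | 0 => Pos 1 + P
  | 1 => Pos 1 + P
  | (i + 2) => P + 2 * min (pushReach Pos P (i + 1)) (Pos (i + 2)) - Pos (i + 2)

lemma pushReach_succ (Pos : ℕ → ℝ) (P : ℝ) (n : ℕ) (hn : 1 ≤ n) :
    pushReach Pos P (n + 1) = P + 2 * min (pushReach Pos P n) (Pos (n + 1)) - Pos (n + 1) := by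
  cases n with
  | zero => omega
  | succ m => rfl

/-- if `f_P p = Pos p + P` and `f_P (i-1) < Pos i` for all `p < i ≤ q`,
then `f_P q` has the stated closed form. -/
theorem stmt1 (Pos : ℕ → ℝ) (P : ℝ) (p q : ℕ) (hp : 1 ≤ p) (hpq : p ≤ q)
    (hbase : pushReach Pos P p = Pos p + P)
    (hback : ∀ i, p < i → i ≤ q → pushReach Pos P (i - 1) < Pos i) :
    pushReach Pos P q = 2 ^ (q - p) * Pos p + ((2 : ℝ) ^ (q - p + 1) - 1) * P
      - ∑ i ∈ Finset.Icc (p + 1) q, (2 : ℝ) ^ (q - i) * Pos i := by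
  obtain ⟨k, rfl⟩ := Nat.exists_eq_add_of_le hpq
  clear hpq
  induction k with
  | zero =>
    simp only [Nat.add_zero, Nat.sub_self, pow_zero, one_mul]
    rw [show Finset.Icc (p + 1) p = ∅ from Finset.Icc_eq_empty (by omega)]
    simp [hbase]
    ring
  | succ k ih =>
    have h1 : 1 ≤ p + k := by omega
    have hlt : pushReach Pos P (p + k) < Pos (p + k + 1) := by
      have := hback (p + k + 1) (by omega) (by omega)
      simpa using this
    have hrec : pushReach Pos P (p + k + 1)
        = P + 2 * pushReach Pos P (p + k) - Pos (p + k + 1) := by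
      rw [pushReach_succ Pos P (p + k) h1, min_eq_left hlt.le]
    have ihe := ih (fun i hi hi' => hback i hi (by omega))
    have hsum : ∑ i ∈ Finset.Icc (p + 1) (p + k + 1), (2 : ℝ) ^ (p + k + 1 - i) * Pos i
        = 2 * ∑ i ∈ Finset.Icc (p + 1) (p + k), (2 : ℝ) ^ (p + k - i) * Pos i
          + Pos (p + k + 1) := by
      rw [Finset.sum_Icc_succ_top (by omega : p + 1 ≤ p + k + 1), Finset.mul_sum]
      congr 1
      · apply Finset.sum_congr rfl
        intro i hi
        simp only [Finset.mem_Icc] at hi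
        rw [show p + k + 1 - i = (p + k - i) + 1 from by omega, pow_succ]
        ring
      · simp
    rw [show p + (k + 1) = p + k + 1 from rfl] at *
    rw [hrec, ihe, hsum, show p + k + 1 - p = k + 1 from by omega,
      show p + k - p = k from by omega]
    ring
end

section
/- Fix positions Pos : ℕ → ℝ with Pos(1) ≤ … ≤ Pos(n), a power P ∈ ℝ, and let g_P be the reverse push-reach function for the n agents. Suppose 1 ≤ q ≤ p ≤ n, g_P(p) = Pos(p) − P, and g_P(i+1) > Pos(i) for every i with q ≤ i < p. Then g_P(q) = 2^{p−q}·Pos(p) − (2^{p−q+1} − 1)·P − Σ_{i=q}^{p−1} 2^{i−q}·Pos(i). -/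
/-- Auxiliary function for the reverse push-reach: `revPushReachAux Pos P n j` is the
value `Reach_RL (n - j, P)`, defined by recursion on the distance `j` from the last agent. -/
def revPushReachAux (Pos : ℕ → ℝ) (P : ℝ) (n : ℕ) : ℕ → ℝ
  | 0 => Pos n - P
  | (j + 1) => 2 * max (revPushReachAux Pos P n j) (Pos (n - (j + 1))) - P - Pos (n - (j + 1))

/-- The reverse push-reach function `Reach_RL`: `revPushReach Pos P n q` is the leftmost
point to which agents `a_q, …, a_n` at positions `Pos q, …, Pos n`, each with power `P`,
can carry the information of `a_n` via a reverse push strategy.  It satisfies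
`revPushReach Pos P n n = Pos n - P` and
`revPushReach Pos P n i = 2 * max (revPushReach Pos P n (i+1)) (Pos i) - P - Pos i`
for `1 ≤ i < n`. -/
def revPushReach (Pos : ℕ → ℝ) (P : ℝ) (n q : ℕ) : ℝ :=
  revPushReachAux Pos P n (n - q)

lemma revPushReach_step (Pos : ℕ → ℝ) (P : ℝ) (n i : ℕ) (h2 : i < n) :
    revPushReach Pos P n i
      = 2 * max (revPushReach Pos P n (i + 1)) (Pos i) - P - Pos i := by
  unfold revPushReach
  have h3 : n - i = (n - (i + 1)) + 1 := by omega
  rw [h3]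
  have h4 : n - ((n - (i + 1)) + 1) = i := by omega
  rw [revPushReachAux, h4]

/-- if `g_P p = Pos p - P` and `g_P (i+1) > Pos i` for all `q ≤ i < p`,
then `g_P q` has the stated closed form. -/
theorem stmt2 (Pos : ℕ → ℝ) (P : ℝ) (n p q : ℕ)
    (hmono : ∀ i, 1 ≤ i → i < n → Pos i ≤ Pos (i + 1))
    (hq : 1 ≤ q) (hqp : q ≤ p) (hpn : p ≤ n)
    (hbase : revPushReach Pos P n p = Pos p - P)
    (hback : ∀ i, q ≤ i → i < p → revPushReach Pos P n (i + 1) > Pos i) :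
    revPushReach Pos P n q = 2 ^ (p - q) * Pos p - ((2 : ℝ) ^ (p - q + 1) - 1) * P
      - ∑ i ∈ Finset.Icc q (p - 1), (2 : ℝ) ^ (i - q) * Pos i := by
  obtain ⟨d, hd⟩ : ∃ d, p = q + d := ⟨p - q, by omega⟩
  clear hmono
  induction d generalizing q with
  | zero =>
    have hpq : p = q := by omega
    subst hpq
    have he : Finset.Icc p (p - 1) = ∅ := Finset.Icc_eq_empty_of_lt (by omega)
    rw [he]
    simp only [Nat.sub_self, pow_zero, Finset.sum_empty]
    rw [hbase]; ring
  | succ d ih =>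
    have hqp' : q < p := by omega
    have hstep := revPushReach_step Pos P n q (by omega)
    have hmax : max (revPushReach Pos P n (q + 1)) (Pos q)
        = revPushReach Pos P n (q + 1) :=
      max_eq_left (le_of_lt (hback q le_rfl hqp'))
    rw [hmax] at hstep
    have hih := ih (q + 1) (by omega) (by omega)
      (fun i hi hip => hback i (by omega) hip) (by omega)
    -- sum splitting
    have hsplit : ∑ i ∈ Finset.Icc q (p - 1), (2 : ℝ) ^ (i - q) * Pos i
        = Pos q + 2 * ∑ i ∈ Finset.Icc (q + 1) (p - 1), (2 : ℝ) ^ (i - (q + 1)) * Pos i := by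
      have hIcc : Finset.Icc q (p - 1) = insert q (Finset.Icc (q + 1) (p - 1)) := by
        rw [Finset.Icc_add_one_left_eq_Ioc, Finset.Ioc_insert_left (by omega : q ≤ p - 1)]
      rw [hIcc, Finset.sum_insert (by simp [Finset.Icc_add_one_left_eq_Ioc])]
      rw [Nat.sub_self, pow_zero, one_mul, Finset.mul_sum]
      congr 1
      apply Finset.sum_congr rfl
      intro i hi
      simp only [Finset.mem_Icc] at hi
      have : i - q = (i - (q + 1)) + 1 := by omega
      rw [this, pow_succ]
      ring
    rw [hsplit, hstep, hih]
    have h1 : p - q = (p - (q + 1)) + 1 := by omega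
    rw [h1, pow_succ, pow_succ]
    ring
end

section
/- Fix positions Pos : ℕ → ℝ with Pos(1) ≤ Pos(2) ≤ …, and for each power P ∈ ℝ let f_P be the push-reach function. Then for every q ≥ 1 the map P ↦ f_P(q) is a strictly increasing continuous function from ℝ onto ℝ; in particular, for every real target t there is a unique P with f_P(q) = t. -/
/- STATEMENT 4: for nondecreasing positions, the map `P ↦ Reach_LR(q, P)` is strictly
increasing, continuous and onto `ℝ`; in particular for every target `t` there is a unique
power `P` with `Reach_LR(q, P) = t`. -/
open Filter

lemma pushReach_aux (Pos : ℕ → ℝ) (q : ℕ) :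
    StrictMono (fun P : ℝ => pushReach Pos P q) ∧
    Continuous (fun P : ℝ => pushReach Pos P q) ∧
    Tendsto (fun P : ℝ => pushReach Pos P q) atTop atTop ∧
    Tendsto (fun P : ℝ => pushReach Pos P q) atBot atBot := by
  induction q using Nat.twoStepInduction with
  | zero =>
    simp only [pushReach]
    exact ⟨fun a b h => by simpa using h, by continuity,
      tendsto_atTop_add_const_left _ _ tendsto_id,
      tendsto_atBot_add_const_left _ _ tendsto_id⟩
  | one =>
    simp only [pushReach]
    exact ⟨fun a b h => by simpa using h, by continuity,
      tendsto_atTop_add_const_left _ _ tendsto_id,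
      tendsto_atBot_add_const_left _ _ tendsto_id⟩
  | more n _ ih =>
    obtain ⟨hsm, hc, htop, hbot⟩ := ih
    set c := Pos (n + 2) with hc'
    have hrw : (fun P : ℝ => pushReach Pos P (n + 2)) =
        fun P : ℝ => P + 2 * min (pushReach Pos P (n + 1)) c - c := by
      funext P; rfl
    rw [hrw]
    refine ⟨?_, ?_, ?_, ?_⟩
    · intro a b hab
      have : min (pushReach Pos a (n + 1)) c ≤ min (pushReach Pos b (n + 1)) c :=
        min_le_min (le_of_lt (hsm hab)) le_rfl
      dsimp only
      linarith
    · exact ((continuous_id.add (continuous_const.mul (hc.min continuous_const))).sub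
        continuous_const)
    · have hev : ∀ᶠ P : ℝ in atTop,
          P + 2 * min (pushReach Pos P (n + 1)) c - c = P + c := by
        filter_upwards [htop.eventually_ge_atTop c] with P hP
        rw [min_eq_right hP]; ring
      exact Tendsto.congr' (EventuallyEq.symm hev) (tendsto_atTop_add_const_right _ c tendsto_id)
    · apply tendsto_atBot_mono (f := fun P : ℝ => P + c)
      · intro P
        have : min (pushReach Pos P (n + 1)) c ≤ c := min_le_right _ _
        linarith
      · exact tendsto_atBot_add_const_right _ c tendsto_id

/-- for nondecreasing positions, the map `P ↦ Reach_LR(q, P)` is strictly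
increasing, continuous and onto `ℝ`; in particular for every target `t` there is a unique
power `P` with `Reach_LR(q, P) = t`. -/
theorem stmt4 (Pos : ℕ → ℝ) (hmono : ∀ i, 1 ≤ i → Pos i ≤ Pos (i + 1))
    (q : ℕ) (hq : 1 ≤ q) :
    StrictMono (fun P : ℝ => pushReach Pos P q) ∧
    Continuous (fun P : ℝ => pushReach Pos P q) ∧
    Function.Surjective (fun P : ℝ => pushReach Pos P q) ∧
    ∀ t : ℝ, ∃! P : ℝ, pushReach Pos P q = t := by
  obtain ⟨hsm, hc, htop, hbot⟩ := pushReach_aux Pos q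
  have hsurj : Function.Surjective (fun P : ℝ => pushReach Pos P q) :=
    Continuous.surjective hc htop hbot
  refine ⟨hsm, hc, hsurj, fun t => ?_⟩
  obtain ⟨P, hP⟩ := hsurj t
  exact ⟨P, hP, fun Q hQ => hsm.injective (hQ.trans hP.symm)⟩
end

section
/- Fix positions Pos : ℕ → ℝ with Pos(1) ≤ … ≤ Pos(n) for n agents, and for each power P ∈ ℝ let g_P be the reverse push-reach function. Then for every q with 1 ≤ q ≤ n the map P ↦ g_P(q) is a strictly decreasing continuous function from ℝ onto ℝ; in particular, for every real target t there is a unique P with g_P(q) = t. -/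
lemma aux_anti (Pos : ℕ → ℝ) (n j : ℕ) :
    StrictAnti (fun P : ℝ => revPushReachAux Pos P n j) := by
  induction j with
  | zero =>
      intro a b hab
      simp only [revPushReachAux]
      linarith
  | succ j ih =>
      intro a b hab
      have h1 : revPushReachAux Pos b n j < revPushReachAux Pos a n j := ih hab
      have h2 : max (revPushReachAux Pos b n j) (Pos (n - (j + 1))) ≤
          max (revPushReachAux Pos a n j) (Pos (n - (j + 1))) :=
        max_le_max h1.le le_rfl
      simp only [revPushReachAux]
      linarith

lemma aux_cont (Pos : ℕ → ℝ) (n j : ℕ) :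
    Continuous (fun P : ℝ => revPushReachAux Pos P n j) := by
  induction j with
  | zero =>
      simp only [revPushReachAux]
      exact continuous_const.sub continuous_id
  | succ j ih =>
      simp only [revPushReachAux]
      exact ((continuous_const.mul (ih.max continuous_const)).sub continuous_id).sub
        continuous_const

lemma aux_atBot (Pos : ℕ → ℝ) (n j : ℕ) :
    Filter.Tendsto (fun P : ℝ => revPushReachAux Pos P n j) Filter.atTop Filter.atBot := by
  induction j with
  | zero =>
      simp only [revPushReachAux]
      exact Filter.tendsto_atBot_add_const_left _ _ Filter.tendsto_neg_atTop_atBot |>.congr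
        (fun x => by ring)
  | succ j ih =>
      have hle : ∀ᶠ P : ℝ in Filter.atTop,
          revPushReachAux Pos P n (j + 1) ≤ Pos (n - (j + 1)) - P := by
        filter_upwards [ih.eventually_le_atBot (Pos (n - (j + 1)))] with P hP
        simp only [revPushReachAux]
        have : max (revPushReachAux Pos P n j) (Pos (n - (j + 1))) = Pos (n - (j + 1)) :=
          max_eq_right hP
        rw [this]; ring_nf; linarith
      have hbase : Filter.Tendsto (fun P : ℝ => Pos (n - (j + 1)) - P)
          Filter.atTop Filter.atBot :=
        Filter.tendsto_atBot_add_const_left _ _ Filter.tendsto_neg_atTop_atBot |>.congr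
          (fun x => by ring)
      exact Filter.tendsto_atBot_mono' _ hle hbase

lemma aux_atTop (Pos : ℕ → ℝ) (n j : ℕ) :
    Filter.Tendsto (fun P : ℝ => revPushReachAux Pos P n j) Filter.atBot Filter.atTop := by
  induction j with
  | zero =>
      simp only [revPushReachAux]
      exact Filter.tendsto_atTop_add_const_left _ _ Filter.tendsto_neg_atBot_atTop |>.congr
        (fun x => by ring)
  | succ j ih =>
      have hge : ∀ P : ℝ,
          Pos (n - (j + 1)) - P ≤ revPushReachAux Pos P n (j + 1) := by
        intro P
        simp only [revPushReachAux]
        have : Pos (n - (j + 1)) ≤ max (revPushReachAux Pos P n j) (Pos (n - (j + 1))) :=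
          le_max_right _ _
        linarith
      have hbase : Filter.Tendsto (fun P : ℝ => Pos (n - (j + 1)) - P)
          Filter.atBot Filter.atTop :=
        Filter.tendsto_atTop_add_const_left _ _ Filter.tendsto_neg_atBot_atTop |>.congr
          (fun x => by ring)
      exact Filter.tendsto_atTop_mono hge hbase

/-- for nondecreasing positions, the map `P ↦ Reach_RL(q, P)` is strictly
decreasing, continuous and onto `ℝ`; in particular for every target `t` there is a unique
power `P` with `Reach_RL(q, P) = t`. -/
theorem stmt5 (Pos : ℕ → ℝ) (n : ℕ) (hn : 1 ≤ n)
    (hmono : ∀ i, 1 ≤ i → i < n → Pos i ≤ Pos (i + 1))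
    (q : ℕ) (hq : 1 ≤ q) (hqn : q ≤ n) :
    StrictAnti (fun P : ℝ => revPushReach Pos P n q) ∧
    Continuous (fun P : ℝ => revPushReach Pos P n q) ∧
    Function.Surjective (fun P : ℝ => revPushReach Pos P n q) ∧
    ∀ t : ℝ, ∃! P : ℝ, revPushReach Pos P n q = t := by
  have hanti : StrictAnti (fun P : ℝ => revPushReach Pos P n q) := aux_anti Pos n (n - q)
  have hcont : Continuous (fun P : ℝ => revPushReach Pos P n q) := aux_cont Pos n (n - q)
  have hsurj : Function.Surjective (fun P : ℝ => revPushReach Pos P n q) :=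
    hcont.surjective' (aux_atTop Pos n (n - q)) (aux_atBot Pos n (n - q))
  refine ⟨hanti, hcont, hsurj, fun t => ?_⟩
  obtain ⟨P, hP⟩ := hsurj t
  exact ⟨P, hP, fun y hy => hanti.injective (hy.trans hP.symm)⟩
end

section
/- Let ε > 0 and P > 0 be reals, and let k be a natural number with 2^k ≥ P/ε. Let Pos : ℕ → ℝ satisfy Pos(1) ≤ Pos(2) ≤ … ≤ Pos(k+2) and Pos(k+2) ≤ Pos(1) + 2P − ε, and let f_P be the push-reach function for these positions and power P. Then there exists an index i with 1 ≤ i ≤ k+1 such that f_P(i) ≥ Pos(i+1). -/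
/-- if `2^k ≥ P/ε`, positions `Pos 1 ≤ … ≤ Pos (k+2)` satisfy
`Pos (k+2) ≤ Pos 1 + 2P - ε` (i.e. `Pos (k+2) - Reach_LR(1,P) ≤ P - ε`), then some
agent index `1 ≤ i ≤ k+1` satisfies `Reach_LR(i,P) ≥ Pos (i+1)`. -/
theorem stmt7 (ε P : ℝ) (hε : 0 < ε) (hP : 0 < P) (k : ℕ)
    (hk : P / ε ≤ 2 ^ k) (Pos : ℕ → ℝ)
    (hmono : ∀ i, 1 ≤ i → i < k + 2 → Pos i ≤ Pos (i + 1))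
    (hclose : Pos (k + 2) ≤ Pos 1 + 2 * P - ε) :
    ∃ i, 1 ≤ i ∧ i ≤ k + 1 ∧ Pos (i + 1) ≤ pushReach Pos P i := by
  by_contra hcon
  push_neg at hcon
  -- key lower bound, by induction
  have key : ∀ j, 1 ≤ j → j ≤ k + 1 →
      Pos (j + 1) + ((2:ℝ) ^ j - 1) * P - 2 ^ (j - 1) * (Pos (j + 1) - Pos 1)
        ≤ pushReach Pos P j := by
    intro j hj
    induction j, hj using Nat.le_induction with
    | base =>
      intro _
      simp [pushReach]
      linarith
    | succ n hn ih =>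
      intro hle
      obtain ⟨m, rfl⟩ : ∃ m, n = m + 1 := ⟨n - 1, by omega⟩
      have ihm := ih (by omega)
      have hlt := hcon (m + 1) (by omega) (by omega)
      have heq : pushReach Pos P (m + 1 + 1)
          = P + 2 * min (pushReach Pos P (m + 1)) (Pos (m + 2)) - Pos (m + 2) := by
        rw [show m + 1 + 1 = m + 2 from rfl, pushReach]
      rw [heq, min_eq_left (by simpa using hlt.le)]
      have hpos : Pos (m + 2) ≤ Pos (m + 3) := by
        simpa using hmono (m + 2) (by omega) (by omega)
      have h1 : (1:ℝ) ≤ 2 ^ m := one_le_pow₀ (by norm_num)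
      simp only [show m + 1 - 1 = m from rfl, show m + 1 + 1 = m + 2 from rfl,
        show m + 1 + 1 - 1 = m + 1 from rfl, show m + 1 + 1 + 1 = m + 3 from rfl] at *
      have p1 : (2:ℝ) ^ (m + 1) = 2 * 2 ^ m := by ring
      have p2 : (2:ℝ) ^ (m + 2) = 4 * 2 ^ m := by ring
      rw [p1] at ihm
      rw [p2, p1]
      nlinarith [mul_nonneg (sub_nonneg.2 h1) (sub_nonneg.2 hpos),
        mul_nonneg (le_of_lt (by positivity : (0:ℝ) < 2 ^ m)) (sub_nonneg.2 hpos)]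
  have hfin := key (k + 1) (by omega) le_rfl
  have hlt := hcon (k + 1) (by omega) le_rfl
  have hPe : P ≤ 2 ^ k * ε := by
    rw [div_le_iff₀ hε] at hk
    linarith
  have e6 : (k + 1 - 1 : ℕ) = k := by omega
  rw [e6] at hfin
  have p1 : (2:ℝ) ^ (k + 1) = 2 * 2 ^ k := by ring
  rw [p1] at hfin
  have hk0 : (0:ℝ) < 2 ^ k := by positivity
  nlinarith [mul_le_mul_of_nonneg_left hclose hk0.le]
end

section
/- Let ε > 0 and P be reals, let k ≥ 1 be a natural number, and let Pos : ℕ → ℝ satisfy Pos(i) ≤ Pos(1) + 2P − ε for every i with 2 ≤ i ≤ k+1. Let f_P be the push-reach function for these positions and power P. If f_P(i) < Pos(i+1) for every i with 1 ≤ i ≤ k, then f_P(k+1) ≥ Pos(1) + P + (2^k − 1)·ε. -/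
/-- if `Pos i ≤ Pos 1 + 2P - ε` for `2 ≤ i ≤ k+1` and
`Reach_LR(i,P) < Pos (i+1)` for all `1 ≤ i ≤ k`, then
`Reach_LR(k+1,P) ≥ Pos 1 + P + (2^k - 1) * ε`. -/
theorem stmt8 (ε P : ℝ) (hε : 0 < ε) (k : ℕ) (hk : 1 ≤ k) (Pos : ℕ → ℝ)
    (hclose : ∀ i, 2 ≤ i → i ≤ k + 1 → Pos i ≤ Pos 1 + 2 * P - ε)
    (hback : ∀ i, 1 ≤ i → i ≤ k → pushReach Pos P i < Pos (i + 1)) :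
    Pos 1 + P + ((2 : ℝ) ^ k - 1) * ε ≤ pushReach Pos P (k + 1) := by
  induction k with
  | zero => omega
  | succ n ih =>
    rcases Nat.eq_zero_or_pos n with hn | hn
    · subst hn
      have h1 : pushReach Pos P 1 < Pos 2 := hback 1 le_rfl le_rfl
      have h2 : Pos 2 ≤ Pos 1 + 2 * P - ε := hclose 2 le_rfl (by norm_num)
      show _ ≤ P + 2 * min (pushReach Pos P 1) (Pos 2) - Pos 2
      rw [min_eq_left h1.le]
      simp only [pushReach] at *
      norm_num
      nlinarith
    · have ihn := ih hn (fun i h2 hle => hclose i h2 (by omega))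
        (fun i h1 hle => hback i h1 (by omega))
      have h1 : pushReach Pos P (n + 1) < Pos (n + 2) := hback (n + 1) (by omega) le_rfl
      have h2 : Pos (n + 2) ≤ Pos 1 + 2 * P - ε := hclose (n + 2) (by omega) le_rfl
      show _ ≤ P + 2 * min (pushReach Pos P (n + 1)) (Pos (n + 2)) - Pos (n + 2)
      rw [min_eq_left h1.le]
      rw [pow_succ]
      nlinarith
end

section
/- Let A be a finite set of at least two points in a metric space, and let D(A) be the maximum, over all nonempty proper subsets X ⊊ A, of min{dist(x,y) : x ∈ X, y ∈ A∖X}. Then there exists an enumeration a_1, a_2, …, a_k of the elements of A (a bijection from {1,…,k} to A, where k = |A|) such that for every i with 2 ≤ i ≤ k there exists j < i with dist(a_i, a_j) ≤ D(A). -/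
/-- The minimum crossing distance of a cut `X ⊊ A`: the infimum of the distances
`dist x y` over `x ∈ X` and `y ∈ A \ X`. -/
noncomputable def minCross {α : Type*} [MetricSpace α] (A X : Finset α) : ℝ :=
  sInf {d : ℝ | ∃ x ∈ X, ∃ y ∈ A, y ∉ X ∧ d = dist x y}

/-- `cutDist A` is the quantity `D(A)` of the paper: the maximum, over all nonempty proper
subsets `X ⊊ A`, of the minimum distance between a point of `X` and a point of `A \ X`. -/
noncomputable def cutDist {α : Type*} [MetricSpace α] (A : Finset α) : ℝ :=
  sSup {d : ℝ | ∃ X : Finset α, X ⊆ A ∧ X.Nonempty ∧ X ≠ A ∧ d = minCross A X}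

lemma minCross_attained {α : Type*} [MetricSpace α] {A X : Finset α}
    (hXA : X ⊆ A) (hX : X.Nonempty) (hXne : X ≠ A) :
    ∃ x ∈ X, ∃ y ∈ A, y ∉ X ∧ minCross A X = dist x y := by
  set S := {d : ℝ | ∃ x ∈ X, ∃ y ∈ A, y ∉ X ∧ d = dist x y} with hS
  have hfin : S.Finite := by
    apply Set.Finite.subset (((X.finite_toSet).prod (A.finite_toSet)).image
      (fun p : α × α => dist p.1 p.2))
    rintro d ⟨x, hx, y, hy, hyX, rfl⟩
    exact ⟨(x, y), ⟨hx, hy⟩, rfl⟩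
  have hss : X ⊂ A := HasSubset.Subset.ssubset_of_ne hXA hXne
  obtain ⟨y, hyA, hyX⟩ := Finset.exists_of_ssubset hss
  obtain ⟨x, hx⟩ := hX
  have hne : S.Nonempty := ⟨dist x y, x, hx, y, hyA, hyX, rfl⟩
  have := hne.csInf_mem hfin
  obtain ⟨x', hx', y', hy', hy'X, hd⟩ := this
  exact ⟨x', hx', y', hy', hy'X, hd⟩

lemma minCross_le_cutDist {α : Type*} [MetricSpace α] {A X : Finset α}
    (hXA : X ⊆ A) (hX : X.Nonempty) (hXne : X ≠ A) :
    minCross A X ≤ cutDist A := by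
  set T := {d : ℝ | ∃ Y : Finset α, Y ⊆ A ∧ Y.Nonempty ∧ Y ≠ A ∧ d = minCross A Y} with hT
  have hfin : T.Finite := by
    apply Set.Finite.subset (((A.powerset : Finset (Finset α)) : Set (Finset α)).toFinite.image
      (minCross A))
    rintro d ⟨Y, hYA, _, _, rfl⟩
    exact ⟨Y, by simpa [Finset.mem_powerset] using hYA, rfl⟩
  exact le_csSup hfin.bddAbove ⟨X, hXA, hX, hXne, rfl⟩

lemma key {α : Type*} [MetricSpace α] (A : Finset α) :
    ∀ n, 1 ≤ n → n ≤ A.card → ∃ l : List α, l.length = n ∧ l.Nodup ∧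
      (∀ x ∈ l, x ∈ A) ∧
      ∀ i (hi : i < l.length), 0 < i → ∃ j, ∃ hj : j < i,
        dist (l.get ⟨i, hi⟩) (l.get ⟨j, hj.trans hi⟩) ≤ cutDist A := by
  classical
  intro n
  induction n with
  | zero => omega
  | succ n ih =>
    intro _ hle
    rcases Nat.eq_or_lt_of_le (Nat.one_le_iff_ne_zero.mpr (by omega) : 1 ≤ n + 1) with h1 | h1
    · -- n = 0, base case
      have hn : n = 0 := by omega
      subst hn
      have : A.Nonempty := Finset.card_pos.mp (by omega)
      obtain ⟨a, ha⟩ := this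
      refine ⟨[a], rfl, List.nodup_singleton a, by simp [ha], ?_⟩
      intro i hi hi0
      simp at hi; omega
    · have hn1 : 1 ≤ n := by omega
      obtain ⟨l, hlen, hnd, hsub, hprop⟩ := ih hn1 (by omega)
      set X := l.toFinset with hX
      have hXA : X ⊆ A := fun x hx => hsub x (List.mem_toFinset.mp hx)
      have hXcard : X.card = n := by rw [hX, List.toFinset_card_of_nodup hnd, hlen]
      have hXne : X ≠ A := by
        intro h; rw [h] at hXcard; omega
      have hXnonempty : X.Nonempty := by
        rw [← Finset.card_pos, hXcard]; omega
      obtain ⟨x, hx, y, hyA, hyX, hd⟩ := minCross_attained hXA hXnonempty hXne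
      have hmc := minCross_le_cutDist hXA hXnonempty hXne
      have hyl : y ∉ l := fun h => hyX (List.mem_toFinset.mpr h)
      refine ⟨l ++ [y], by simp [hlen], ?_, ?_, ?_⟩
      · simpa [List.nodup_append] using ⟨hnd, fun a ha hay => hyl (hay ▸ ha)⟩
      · intro z hz
        rcases List.mem_append.mp hz with h | h
        · exact hsub z h
        · simp at h; subst h; exact hyA
      · intro i hi hi0
        have hlen' : (l ++ [y]).length = n + 1 := by simp [hlen]
        by_cases hilt : i < n
        · -- old element
          have hil : i < l.length := by omega
          obtain ⟨j, hj, hdist⟩ := hprop i hil hi0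
          refine ⟨j, hj, ?_⟩
          have e1 : (l ++ [y]).get ⟨i, hi⟩ = l.get ⟨i, hil⟩ := by
            simp [List.getElem_append_left, hil]
          have e2 : (l ++ [y]).get ⟨j, hj.trans hi⟩ = l.get ⟨j, hj.trans hil⟩ := by
            simp [List.getElem_append_left, hj.trans hil]
          rw [e1, e2]
          exact hdist
        · -- i = n, the new element y
          have hin : i = n := by omega
          subst hin
          obtain ⟨j, hjx⟩ := List.mem_iff_get.mp (List.mem_toFinset.mp hx)
          refine ⟨j, by omega, ?_⟩
          have e1 : (l ++ [y]).get ⟨i, hi⟩ = y := by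
            have : (l ++ [y])[i] = y := by
              rw [List.getElem_append_right (by omega)]
              simp [hlen]
            simpa using this
          have hjn : (j : ℕ) < i := by omega
          have e2 : (l ++ [y]).get ⟨j, hjn.trans hi⟩ = x := by
            have : (l ++ [y])[(j:ℕ)] = l[(j:ℕ)] :=
              List.getElem_append_left (by omega)
            rw [← hjx]
            simpa [List.get] using this
          rw [e1, e2, dist_comm, ← hd]
          exact hmc

/-- a finite set `A` of at least two points in a metric space admits an
enumeration `a_1, …, a_k` (a bijection from `Fin A.card` onto `A`) such that every point
except the first is within distance `D(A)` of some earlier point. -/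
theorem stmt11 {α : Type*} [MetricSpace α] (A : Finset α) (hA : 2 ≤ A.card) :
    ∃ a : Fin A.card → α, Function.Injective a ∧ Set.range a = (A : Set α) ∧
      ∀ i : Fin A.card, 0 < (i : ℕ) →
        ∃ j : Fin A.card, j < i ∧ dist (a i) (a j) ≤ cutDist A := by
  classical
  obtain ⟨l, hlen, hnd, hsub, hprop⟩ := key A A.card (by omega) le_rfl
  refine ⟨fun i => l.get ⟨i, by omega⟩, ?_, ?_, ?_⟩
  · intro i j hij
    have := List.nodup_iff_injective_get.mp hnd hij
    exact Fin.ext (by simpa using congrArg Fin.val this)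
  · apply Set.eq_of_subset_of_subset
    · rintro z ⟨i, rfl⟩
      exact hsub _ (l.get_mem _)
    · intro z hz
      have hz' : z ∈ l := by
        have h1 : l.toFinset ⊆ A := fun x hx => hsub x (List.mem_toFinset.mp hx)
        have h2 : l.toFinset.card = A.card := by
          rw [List.toFinset_card_of_nodup hnd, hlen]
        have : l.toFinset = A := Finset.eq_of_subset_of_card_le h1 (le_of_eq h2.symm)
        rw [← this] at hz
        exact List.mem_toFinset.mp hz
      obtain ⟨k, hk⟩ := List.mem_iff_get.mp hz'
      exact ⟨⟨k, by omega⟩, by simpa using hk⟩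
  · intro i hi
    obtain ⟨j, hj, hdist⟩ := hprop i (by omega) hi
    exact ⟨⟨j, by omega⟩, by simpa [Fin.lt_def] using hj, hdist⟩
end

section
/- Fix strictly increasing positions Pos(1) < Pos(2) < … < Pos(n) of n agents on the line, let f_P be the push-reach function for power P, and for 2 ≤ p ≤ n define the activation threshold AC(p) := inf{P ∈ ℝ : f_P(p−1) + P ≥ Pos(p)}, with AC(1) := 0. Then AC is strictly increasing: AC(p) < AC(p+1) for every p with 1 ≤ p ≤ n−1. -/
/-- The activation threshold `AC_LR`: `activation Pos p` is the least power `P` ensuring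
that agent `a_p` can learn the information of `a_1`, i.e. `Reach_LR(p-1, P) + P ≥ Pos p`;
by convention `activation Pos 1 = 0`. -/
noncomputable def activation (Pos : ℕ → ℝ) (p : ℕ) : ℝ :=
  if p ≤ 1 then 0 else sInf {P : ℝ | Pos p ≤ pushReach Pos P (p - 1) + P}

lemma pushReach_two (Pos : ℕ → ℝ) (P : ℝ) (i : ℕ) :
    pushReach Pos P (i+2) = P + 2 * min (pushReach Pos P (i+1)) (Pos (i+2)) - Pos (i+2) := rfl

lemma pushReach_one (Pos : ℕ → ℝ) (P : ℝ) : pushReach Pos P 1 = Pos 1 + P := rfl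

/-- lower slope bound: increasing `P` by `t ≥ 0` increases reach by at least `t`. -/
lemma pushReach_lower (Pos : ℕ → ℝ) (P t : ℝ) (ht : 0 ≤ t) :
    ∀ q, pushReach Pos P q + t ≤ pushReach Pos (P + t) q := by
  intro q
  induction q using Nat.strong_induction_on with
  | _ q ih =>
    match q with
    | 0 => simp only [pushReach]; linarith
    | 1 => simp only [pushReach]; linarith
    | (i+2) =>
      have h := ih (i+1) (by omega)
      have hm : min (pushReach Pos P (i+1)) (Pos (i+2)) ≤
          min (pushReach Pos (P+t) (i+1)) (Pos (i+2)) := min_le_min (by linarith) le_rfl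
      simp only [pushReach_two]; linarith

/-- upper Lipschitz bound with constant `3^q`. -/
lemma pushReach_upper (Pos : ℕ → ℝ) (P t : ℝ) (ht : 0 ≤ t) :
    ∀ q, pushReach Pos (P + t) q ≤ pushReach Pos P q + 3 ^ q * t := by
  intro q
  induction q using Nat.strong_induction_on with
  | _ q ih =>
    match q with
    | 0 => simp only [pushReach, pow_zero]; linarith
    | 1 => simp only [pushReach, pow_one]; linarith
    | (i+2) =>
      have h := ih (i+1) (by omega)
      have hm : min (pushReach Pos (P+t) (i+1)) (Pos (i+2)) ≤
          min (pushReach Pos P (i+1)) (Pos (i+2)) + 3 ^ (i+1) * t := by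
        calc min (pushReach Pos (P+t) (i+1)) (Pos (i+2))
            ≤ min (pushReach Pos P (i+1) + 3 ^ (i+1) * t) (Pos (i+2) + 3 ^ (i+1) * t) :=
              min_le_min h (by nlinarith [pow_nonneg (by norm_num : (0:ℝ) ≤ 3) (i+1)])
          _ = min (pushReach Pos P (i+1)) (Pos (i+2)) + 3 ^ (i+1) * t := by
              rw [min_add_add_right]
      have h3 : (1:ℝ) ≤ 3 ^ (i+1) := one_le_pow₀ (by norm_num)
      have : (3:ℝ) ^ (i+2) = 3 * 3 ^ (i+1) := by ring
      simp only [pushReach_two]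
      nlinarith [pow_nonneg (by norm_num : (0:ℝ) ≤ 3) (i+1)]

/-- for nonpositive power, reach never exceeds `Pos 1 + P`. -/
lemma pushReach_nonpos (Pos : ℕ → ℝ) (P : ℝ) (hP : P ≤ 0) :
    ∀ q, 1 ≤ q → pushReach Pos P q ≤ Pos 1 + P := by
  intro q
  induction q using Nat.strong_induction_on with
  | _ q ih =>
    match q with
    | 0 => intro h; omega
    | 1 => intro _; simp [pushReach_one]
    | (i+2) =>
      intro _
      have h := ih (i+1) (by omega) (by omega)
      have h1 := min_le_left (pushReach Pos P (i+1)) (Pos (i+2))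
      have h2 := min_le_right (pushReach Pos P (i+1)) (Pos (i+2))
      simp only [pushReach_two]; linarith

/-- for large power, the reach of the first `q` agents passes `Pos (q+1)`. -/
lemma pushReach_big (Pos : ℕ → ℝ) (P : ℝ) :
    ∀ q, 1 ≤ q → (∀ j, 1 ≤ j → j ≤ q → Pos (j+1) ≤ Pos j + P) →
      Pos (q+1) ≤ pushReach Pos P q := by
  intro q hq
  induction q, hq using Nat.le_induction with
  | base => intro h; have h1 := h 1 le_rfl le_rfl; simp only [pushReach_one]; linarith
  | succ k hk ih =>
    intro h
    have ihh := ih (fun j hj1 hj2 => h j hj1 (by omega))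
    obtain ⟨m, rfl⟩ : ∃ m, k = m + 1 := ⟨k-1, by omega⟩
    have hmin : min (pushReach Pos P (m+1)) (Pos (m+2)) = Pos (m+2) := min_eq_right ihh
    have hstep := h (m+2) (by omega) le_rfl
    show Pos (m+2+1) ≤ pushReach Pos P (m+2)
    rw [pushReach_two, hmin]; linarith

lemma pushReach_cont (Pos : ℕ → ℝ) (q : ℕ) : Continuous (fun P => pushReach Pos P q) := by
  induction q using Nat.strong_induction_on with
  | _ q ih =>
    match q with
    | 0 => simp only [pushReach]; fun_prop
    | 1 => simp only [pushReach]; fun_prop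
    | (i+2) =>
      have h := ih (i+1) (by omega)
      simp only [pushReach_two]; fun_prop

lemma pos_one_lt (Pos : ℕ → ℝ) (n : ℕ)
    (hmono : ∀ i, 1 ≤ i → i < n → Pos i < Pos (i + 1)) :
    ∀ p, 2 ≤ p → p ≤ n → Pos 1 < Pos p := by
  intro p
  induction p with
  | zero => omega
  | succ k ih =>
    intro h2 hn
    rcases Nat.lt_or_ge k 2 with hk | hk
    · have hk1 : k = 1 := by omega
      subst hk1
      exact hmono 1 le_rfl (by omega)
    · exact (ih hk (by omega)).trans (hmono k (by omega) (by omega))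

lemma activation_key (Pos : ℕ → ℝ) (n : ℕ)
    (hmono : ∀ i, 1 ≤ i → i < n → Pos i < Pos (i + 1))
    (p : ℕ) (hp2 : 2 ≤ p) (hpn : p ≤ n) :
    0 < activation Pos p ∧
      pushReach Pos (activation Pos p) (p - 1) + activation Pos p = Pos p := by
  obtain ⟨q, rfl⟩ : ∃ q, p = q + 1 := ⟨p - 1, by omega⟩
  have hq1 : 1 ≤ q := by omega
  have hq : q + 1 - 1 = q := rfl
  set S := {P : ℝ | Pos (q+1) ≤ pushReach Pos P q + P} with hSdef
  have hact : activation Pos (q+1) = sInf S := by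
    simp only [activation, if_neg (by omega : ¬ (q+1 ≤ 1)), hq, hSdef]
  -- nonempty
  have hne : S.Nonempty := by
    set P₀ := ∑ j ∈ Finset.Icc 1 q, |Pos (j+1) - Pos j| with hP₀def
    have hP₀ : 0 ≤ P₀ := Finset.sum_nonneg (fun j _ => abs_nonneg _)
    have hgap : ∀ j, 1 ≤ j → j ≤ q → Pos (j+1) ≤ Pos j + P₀ := by
      intro j hj1 hj2
      have hmem : j ∈ Finset.Icc 1 q := Finset.mem_Icc.mpr ⟨hj1, hj2⟩
      have := Finset.single_le_sum (f := fun j => |Pos (j+1) - Pos j|)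
        (fun i _ => abs_nonneg _) hmem
      have habs := le_abs_self (Pos (j+1) - Pos j)
      linarith
    have := pushReach_big Pos P₀ q hq1 hgap
    exact ⟨P₀, by simp only [hSdef, Set.mem_setOf_eq]; linarith⟩
  -- bounded below
  have hbdd : BddBelow S := by
    refine ⟨min 0 ((Pos (q+1) - Pos 1)/2), fun P hP => ?_⟩
    simp only [hSdef, Set.mem_setOf_eq] at hP
    rcases le_or_gt 0 P with h0 | h0
    · exact le_trans (min_le_left _ _) h0
    · have := pushReach_nonpos Pos P (le_of_lt h0) q hq1
      have : (Pos (q+1) - Pos 1)/2 ≤ P := by linarith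
      exact le_trans (min_le_right _ _) this
  -- closed
  have hclosed : IsClosed S := isClosed_le continuous_const
    ((pushReach_cont Pos q).add continuous_id)
  set c := sInf S with hcdef
  have hmem : c ∈ S := hclosed.csInf_mem hne hbdd
  simp only [hSdef, Set.mem_setOf_eq] at hmem
  -- equality
  have heq : pushReach Pos c q + c = Pos (q+1) := by
    by_contra hne'
    have hlt : Pos (q+1) < pushReach Pos c q + c := lt_of_le_of_ne hmem (Ne.symm hne')
    set K : ℝ := 3 ^ q + 1 with hKdef
    have hK : 0 < K := by positivity
    set ε := (pushReach Pos c q + c - Pos (q+1)) / K with hεdef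
    have hε : 0 < ε := by apply div_pos <;> linarith
    have hup := pushReach_upper Pos (c - ε) ε (le_of_lt hε) q
    rw [sub_add_cancel] at hup
    have hmem' : c - ε ∈ S := by
      simp only [hSdef, Set.mem_setOf_eq]
      have : K * ε = pushReach Pos c q + c - Pos (q+1) := by
        rw [hεdef]; field_simp
      nlinarith
    have := csInf_le hbdd hmem'
    rw [← hcdef] at this
    linarith
  -- positivity
  have hpos : 0 < c := by
    by_contra h0
    push_neg at h0
    have h1 := pushReach_nonpos Pos c h0 q hq1
    have h2 := pos_one_lt Pos n hmono (q+1) hp2 hpn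
    linarith
  rw [hact]
  exact ⟨hpos, heq⟩

/-- for strictly increasing positions `Pos 1 < … < Pos n`, the activation
threshold is strictly increasing: `AC(p) < AC(p+1)` for `1 ≤ p ≤ n - 1`. -/
theorem stmt12 (Pos : ℕ → ℝ) (n : ℕ)
    (hmono : ∀ i, 1 ≤ i → i < n → Pos i < Pos (i + 1)) :
    ∀ p, 1 ≤ p → p + 1 ≤ n → activation Pos p < activation Pos (p + 1) := by
  intro p hp1 hpn
  rcases Nat.lt_or_ge p 2 with hp | hp
  · -- p = 1
    have hp1' : p = 1 := by omega
    subst hp1'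
    have hkey := activation_key Pos n hmono 2 le_rfl hpn
    have : activation Pos 1 = 0 := by simp [activation]
    rw [this]
    exact hkey.1
  · -- p ≥ 2
    obtain ⟨hc_pos, hc_eq⟩ := activation_key Pos n hmono p hp (by omega)
    obtain ⟨hc'_pos, hc'_eq⟩ := activation_key Pos n hmono (p+1) (by omega) hpn
    set c := activation Pos p with hc
    set c' := activation Pos (p+1) with hc'
    obtain ⟨k, rfl⟩ : ∃ k, p = k + 2 := ⟨p - 2, by omega⟩
    have hq : k + 2 - 1 = k + 1 := rfl
    rw [hq] at hc_eq
    have hq' : k + 2 + 1 - 1 = k + 2 := rfl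
    rw [hq'] at hc'_eq
    -- compute pushReach at p for power c
    have hmin : min (pushReach Pos c (k+1)) (Pos (k+2)) = pushReach Pos c (k+1) :=
      min_eq_left (by linarith)
    have hfp : pushReach Pos c (k+2) = Pos (k+2) - c := by
      rw [pushReach_two, hmin]; linarith
    have hPlt : Pos (k+2) < Pos (k+2+1) := hmono (k+2) (by omega) (by omega)
    by_contra hcon
    push_neg at hcon
    -- c' ≤ c
    have hlow := pushReach_lower Pos c' (c - c') (by linarith) (k+2)
    rw [add_sub_cancel] at hlow
    -- pushReach Pos c' (k+2) + (c - c') ≤ pushReach Pos c (k+2) = Pos(k+2) - c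
    have : Pos (k+2+1) ≤ Pos (k+2) := by
      have := hc'_eq
      nlinarith
    linarith
end

section
/- Fix positions Pos : ℕ → ℝ with Pos(1) ≤ Pos(2) ≤ …, a power P ∈ ℝ, and let f_P be the push-reach function. Let q ≥ 1 and suppose Pos(i) ≤ f_P(i−1) + P for every i with 2 ≤ i ≤ q. Then f_P is nondecreasing on {1,…,q}: f_P(i−1) ≤ f_P(i) for every i with 2 ≤ i ≤ q. -/
lemma pushReach_le (Pos : ℕ → ℝ) (P : ℝ) (j : ℕ) (hj : 1 ≤ j) :
    pushReach Pos P j ≤ Pos j + P := by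
  match j, hj with
  | 1, _ => simp [pushReach]
  | (k + 2), _ =>
    have : min (pushReach Pos P (k + 1)) (Pos (k + 2)) ≤ Pos (k + 2) := min_le_right _ _
    simp only [pushReach]
    linarith

/-- for nondecreasing positions, if the activation condition
`Pos i ≤ Reach_LR(i-1, P) + P` holds for all `2 ≤ i ≤ q`, then `Reach_LR(·, P)` is
nondecreasing on `{1, …, q}`. -/
theorem stmt15 (Pos : ℕ → ℝ) (hmono : ∀ i, 1 ≤ i → Pos i ≤ Pos (i + 1))
    (P : ℝ) (q : ℕ) (hq : 1 ≤ q)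
    (hact : ∀ i, 2 ≤ i → i ≤ q → Pos i ≤ pushReach Pos P (i - 1) + P) :
    ∀ i, 2 ≤ i → i ≤ q → pushReach Pos P (i - 1) ≤ pushReach Pos P i := by
  intro i hi hiq
  obtain ⟨k, rfl⟩ : ∃ k, i = k + 2 := ⟨i - 2, by omega⟩
  have hact' := hact (k + 2) (by omega) hiq
  have hred : k + 2 - 1 = k + 1 := rfl
  rw [hred] at hact'
  show pushReach Pos P (k + 1) ≤ pushReach Pos P (k + 2)
  rcases le_total (pushReach Pos P (k + 1)) (Pos (k + 2)) with h | h
  · simp only [pushReach, min_eq_left h]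
    linarith
  · simp only [pushReach, min_eq_right h]
    have h1 : pushReach Pos P (k + 1) ≤ Pos (k + 1) + P :=
      pushReach_le Pos P (k + 1) (by omega)
    have h2 : Pos (k + 1) ≤ Pos (k + 2) := hmono (k + 1) (by omega)
    linarith
end
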